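/- For every odd integer m ≥ 5, the girth of the generalized Grötzsch graph G_m is 4, i.e., the length of a shortest cycle in G_m is 4. -/

import Mathlib

open SimpleGraph

/-- Vertex type for the graphs on `2m+1` vertices: `Sum.inl i` is the vertex `pᵢ`,
`Sum.inr (Sum.inl i)` is the vertex `qᵢ` (indices taken modulo `m`),
and `Sum.inr (Sum.inr ())` is the apex vertex `a`. -/
abbrev GVert (m : ℕ) := Sum (ZMod m) (Sum (ZMod m) Unit)

/-- The vertex `pᵢ`. -/
def pV {m : ℕ} (i : ZMod m) : GVert m := Sum.inl i

/-- The vertex `qᵢ`. -/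
def qV {m : ℕ} (i : ZMod m) : GVert m := Sum.inr (Sum.inl i)

/-- The apex vertex `a`. -/
def aV (m : ℕ) : GVert m := Sum.inr (Sum.inr ())

/-- The generalized Grötzsch graph `G_m` (intended for odd `m ≥ 5`): edges are
`a qᵢ` for all `i`, `pᵢ pᵢ₊₁` for all `i`, and `pᵢ q_{i + (2k-1)}` for all `i` and
`0 ≤ k ≤ (m-3)/2`, all indices taken modulo `m`. -/
def GenGrotzsch (m : ℕ) : SimpleGraph (GVert m) :=
  SimpleGraph.fromRel (fun u v =>
    (∃ i : ZMod m, u = aV m ∧ v = qV i) ∨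
    (∃ i : ZMod m, u = pV i ∧ v = pV (i + 1)) ∨
    (∃ (i : ZMod m) (k : ℕ), k ≤ (m - 3) / 2 ∧
      u = pV i ∧ v = qV (i + (2 * (k : ZMod m) - 1))))


/-! The 4-cycle `a q₁ p₀ q₋₁` bounds the girth by 4. There is no triangle: the neighbours
of `a` are the pairwise non-adjacent `qᵢ`, and `a` is not adjacent to any `pⱼ`, so a triangle
lies on the `p`-cycle (impossible for `m ≥ 4`) or consists of two consecutive `pⱼ` and a
common `q`-neighbour. The latter would make two offsets `2k - 1` and `2k' - 1`
differ by `±1` modulo `m`; as `2k` and `2k' + 1` are both below `m`, they would be equal as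
natural numbers, contradicting parity. -/

namespace SimpleGraph

variable {V : Type*} {G : SimpleGraph V}

lemma CliqueFree.four_le_egirth (h : G.CliqueFree 3) : 4 ≤ G.egirth := by
  rw [le_egirth]
  intro a w hw
  by_contra! hlt
  have hw3 : w.length = 3 := by
    have := hw.three_le_length
    norm_cast at hlt
    omega
  obtain ⟨s, hs⟩ := is3Clique_iff_exists_cycle_length_three.mpr ⟨a, w, hw, hw3⟩
  exact h s hs

lemma egirth_le_four {a b c d : V} (hab : G.Adj a b) (hbc : G.Adj b c) (hcd : G.Adj c d)
    (hda : G.Adj d a) (hac : a ≠ c) (hbd : b ≠ d) : G.egirth ≤ 4 := by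
  have hcyc : (Walk.cons hab (.cons hbc (.cons hcd (.cons hda .nil)))).IsCycle := by
    simp [Walk.cons_isCycle_iff, hab.ne, hbc.ne, hcd.ne, hda.ne, hab.ne.symm, hda.ne.symm,
      hac, hbd, hac.symm]
  exact egirth_le_length hcyc

end SimpleGraph

namespace ZMod

variable {m : ℕ}

lemma natCast_ne_zero_of_lt {c : ℕ} (h0 : 0 < c) (hc : c < m) : (c : ZMod m) ≠ 0 := by
  rw [Ne, natCast_eq_zero_iff]
  exact Nat.not_dvd_of_pos_of_lt h0 hc

lemma natCast_inj_of_lt {a b : ℕ} (ha : a < m) (hb : b < m) : (a : ZMod m) = b ↔ a = b :=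
  ⟨fun h => by rw [← val_natCast_of_lt ha, ← val_natCast_of_lt hb, h], congrArg _⟩

lemma add_add_ne_zero_of_eq_one_or_neg_one (hm : 4 ≤ m) {a b c : ZMod m}
    (ha : a = 1 ∨ a = -1) (hb : b = 1 ∨ b = -1) (hc : c = 1 ∨ c = -1) : a + b + c ≠ 0 := by
  have h1 : ((1 : ℕ) : ZMod m) ≠ 0 := natCast_ne_zero_of_lt one_pos (by omega)
  have h3 : ((3 : ℕ) : ZMod m) ≠ 0 := natCast_ne_zero_of_lt three_pos (by omega)
  push_cast at h1 h3
  rcases ha with rfl | rfl <;> rcases hb with rfl | rfl <;> rcases hc with rfl | rfl <;>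
    ring_nf <;> simp [h1, h3]

end ZMod

@[elab_as_elim]
lemma GVert.cases {m : ℕ} {motive : GVert m → Prop} (p : ∀ i, motive (pV i))
    (q : ∀ i, motive (qV i)) (a : motive (aV m)) (v : GVert m) : motive v := by
  rcases v with i | i | ⟨⟩
  exacts [p i, q i, a]

namespace GenGrotzsch

variable {m : ℕ}

@[simp]
lemma adj_aV_qV (i : ZMod m) : (GenGrotzsch m).Adj (aV m) (qV i) := by
  simp [GenGrotzsch, pV, qV, aV]

@[simp]
lemma not_adj_aV_pV (i : ZMod m) : ¬ (GenGrotzsch m).Adj (aV m) (pV i) := by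
  simp [GenGrotzsch, pV, qV, aV]

@[simp]
lemma not_adj_qV_qV (i j : ZMod m) : ¬ (GenGrotzsch m).Adj (qV i) (qV j) := by
  simp [GenGrotzsch, pV, qV, aV]

lemma adj_pV_pV_iff {i j : ZMod m} :
    (GenGrotzsch m).Adj (pV i) (pV j) ↔ i ≠ j ∧ (j = i + 1 ∨ i = j + 1) := by
  simp [GenGrotzsch, pV, qV, aV]

lemma adj_pV_qV_iff {i j : ZMod m} :
    (GenGrotzsch m).Adj (pV i) (qV j) ↔
      ∃ k ≤ (m - 3) / 2, j = i + (2 * (k : ZMod m) - 1) := by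
  simp [GenGrotzsch, pV, qV, aV, eq_comm]

lemma sub_eq_one_or_neg_one_of_adj {i j : ZMod m} (h : (GenGrotzsch m).Adj (pV i) (pV j)) :
    j - i = 1 ∨ j - i = -1 := by
  obtain ⟨-, rfl | rfl⟩ := adj_pV_pV_iff.mp h
  · exact Or.inl (add_sub_cancel_left i 1)
  · exact Or.inr (by ring)

lemma not_adj_pV_of_adj_pV_pV (hm : 4 ≤ m) {i j l : ZMod m}
    (hij : (GenGrotzsch m).Adj (pV i) (pV j)) (hjl : (GenGrotzsch m).Adj (pV j) (pV l)) :
    ¬ (GenGrotzsch m).Adj (pV l) (pV i) :=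
  fun hli => ZMod.add_add_ne_zero_of_eq_one_or_neg_one hm (sub_eq_one_or_neg_one_of_adj hij)
    (sub_eq_one_or_neg_one_of_adj hjl) (sub_eq_one_or_neg_one_of_adj hli) (by ring)

lemma two_mul_ne_two_mul_add_one (hm : 3 ≤ m) {k k' : ℕ} (hk : k ≤ (m - 3) / 2)
    (hk' : k' ≤ (m - 3) / 2) : 2 * (k : ZMod m) ≠ 2 * k' + 1 := by
  intro h
  have := (ZMod.natCast_inj_of_lt (m := m) (a := 2 * k) (b := 2 * k' + 1) (by omega)
    (by omega)).mp (by push_cast; exact h)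
  omega

lemma not_adj_qV_of_adj_pV_pV (hm : 3 ≤ m) {i j l : ZMod m}
    (hij : (GenGrotzsch m).Adj (pV i) (pV j)) (hil : (GenGrotzsch m).Adj (pV i) (qV l)) :
    ¬ (GenGrotzsch m).Adj (pV j) (qV l) := by
  intro hjl
  obtain ⟨k, hk, rfl⟩ := adj_pV_qV_iff.mp hil
  obtain ⟨k', hk', hl⟩ := adj_pV_qV_iff.mp hjl
  rcases sub_eq_one_or_neg_one_of_adj hij with h | h
  · exact two_mul_ne_two_mul_add_one hm hk hk' (by linear_combination hl + h)
  · exact two_mul_ne_two_mul_add_one hm hk' hk (by linear_combination -hl - h)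

lemma cliqueFree_three (hm : 4 ≤ m) : (GenGrotzsch m).CliqueFree 3 := by
  intro s hs
  obtain ⟨x, y, z, hxy, hxz, hyz, -⟩ := is3Clique_iff.mp hs
  induction x using GVert.cases <;> induction y using GVert.cases <;>
    induction z using GVert.cases
  all_goals first
    | exact not_adj_pV_of_adj_pV_pV hm hxy hyz hxz.symm
    | exact not_adj_qV_of_adj_pV_pV (by omega) hxy hxz hyz
    | exact not_adj_qV_of_adj_pV_pV (by omega) hxz hxy hyz.symm
    | exact not_adj_qV_of_adj_pV_pV (by omega) hyz hxy.symm hxz.symm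
    | simp_all [adj_comm]

lemma egirth_le_four (hm : 5 ≤ m) : (GenGrotzsch m).egirth ≤ 4 := by
  have hq1 : (GenGrotzsch m).Adj (pV 0) (qV 1) := adj_pV_qV_iff.mpr ⟨1, by omega, by ring⟩
  have hq_neg1 : (GenGrotzsch m).Adj (pV 0) (qV (-1)) :=
    adj_pV_qV_iff.mpr ⟨0, by omega, by simp⟩
  have hne : (1 : ZMod m) ≠ -1 := by
    intro h
    apply ZMod.natCast_ne_zero_of_lt (m := m) two_pos (by omega)
    linear_combination h
  refine SimpleGraph.egirth_le_four (adj_aV_qV 1) hq1.symm hq_neg1 (adj_aV_qV (-1)).symm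
    (by simp [aV, pV]) ?_
  simpa [qV] using hne

end GenGrotzsch

theorem genGrotzsch_girth_general (m : ℕ) (h5 : 5 ≤ m) :
    (GenGrotzsch m).girth = 4 := by
  have h : (GenGrotzsch m).egirth = 4 :=
    (GenGrotzsch.egirth_le_four h5).antisymm
      (GenGrotzsch.cliqueFree_three (by omega)).four_le_egirth
  simp [SimpleGraph.girth, h]

/-- For every odd integer `m ≥ 5`, the girth of the generalized Grötzsch graph `G_m`
is `4`. -/
theorem genGrotzsch_girth (m : ℕ) (h5 : 5 ≤ m) (hodd : Odd m) :
    (GenGrotzsch m).girth = 4 :=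
  genGrotzsch_girth_general m h5
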